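/- arXiv:2306.02498 — 2 statements merged into one kernel-verified Lean document; each statement's English description precedes it below -/
import Mathlib

section
/- Let G and H be groups with a common subgroup N that is normal in both G and H. Then the quotient (G *_N H)/N is isomorphic to the free product (G/N) * (H/N). -/
open Monoid

/-- If `N` is a common subgroup of two groups (embedded via injective
homomorphisms `φ b`, `b : Bool`), normal in both, then the quotient of the amalgamated free
product `G *_N H = Monoid.PushoutI φ` by (the normal image `K` of) `N` is isomorphic to the free
product `(G/N) * (H/N)`, i.e. the coproduct `Monoid.CoprodI` of the quotients. -/
theorem quotient_amalgamated_iso_freeProduct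
    {N : Type*} [Group N] {G : Bool → Type*} [∀ b, Group (G b)]
    (φ : ∀ b, N →* G b) (hinj : ∀ b, Function.Injective (φ b))
    [hnorm : ∀ b, ((φ b).range).Normal]
    (K : Subgroup (PushoutI φ)) [K.Normal]
    (hK : K = ((PushoutI.of (φ := φ) true).comp (φ true)).range) :
    Nonempty ((PushoutI φ ⧸ K) ≃* CoprodI (fun b => G b ⧸ (φ b).range)) := by
  -- forward map on PushoutI
  set F : PushoutI φ →* CoprodI (fun b => G b ⧸ (φ b).range) :=
    PushoutI.lift
      (fun b => (CoprodI.of (M := fun b => G b ⧸ (φ b).range) (i := b)).comp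
        (QuotientGroup.mk' ((φ b).range)))
      1
      (by
        intro b
        ext n
        have : ((φ b n : G b) : G b ⧸ (φ b).range) = 1 :=
          (QuotientGroup.eq_one_iff _).2 ⟨n, rfl⟩
        simp [this]) with hF
  have hFK : ∀ x ∈ K, F x = 1 := by
    intro x hx
    rw [hK] at hx
    obtain ⟨n, rfl⟩ := hx
    have : ((φ true n : G true) : G true ⧸ (φ true).range) = 1 :=
      (QuotientGroup.eq_one_iff _).2 ⟨n, rfl⟩
    simp [hF, this]
  set F' : (PushoutI φ ⧸ K) →* CoprodI (fun b => G b ⧸ (φ b).range) :=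
    QuotientGroup.lift K F hFK with hF'
  -- backward map
  have hker : ∀ b (n : N), PushoutI.of (φ := φ) b (φ b n) ∈ K := by
    intro b n
    rw [PushoutI.of_apply_eq_base, hK]
    exact ⟨n, PushoutI.of_apply_eq_base φ true n⟩
  set g : ∀ b, (G b ⧸ (φ b).range) →* (PushoutI φ ⧸ K) := fun b =>
    QuotientGroup.lift ((φ b).range)
      ((QuotientGroup.mk' K).comp (PushoutI.of (φ := φ) b))
      (by
        rintro x ⟨n, rfl⟩
        simpa [QuotientGroup.eq_one_iff] using hker b n) with hg
  set B : CoprodI (fun b => G b ⧸ (φ b).range) →* (PushoutI φ ⧸ K) :=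
    CoprodI.lift g with hB
  refine ⟨MonoidHom.toMulEquiv F' B ?_ ?_⟩
  · apply QuotientGroup.monoidHom_ext
    apply PushoutI.hom_ext_nonempty
    intro b
    ext x
    simp [hF', hF, hB, hg]
  · apply CoprodI.ext_hom
    intro b
    apply QuotientGroup.monoidHom_ext
    ext x
    simp [hF', hF, hB, hg]
end

section
/- Every subgroup of an MF group is MF. -/
noncomputable section

open scoped ENNReal Matrix.Norms.L2Operator

/-- `ℓ²(G)` with complex coefficients. -/
abbrev l2 (G : Type*) : Type _ := lp (fun _ : G => ℂ) 2

variable {G : Type*} [Group G]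

lemma memℓp_translate (g : G) (f : l2 G) :
    Memℓp (fun h : G => f (g⁻¹ * h)) 2 := by
  have hf := lp.memℓp f
  rw [memℓp_gen_iff (by norm_num)] at hf ⊢
  exact ((Equiv.mulLeft g⁻¹).summable_iff (f := fun h : G => ‖f h‖ ^ (2 : ℝ≥0∞).toReal)).2 hf

/-- The left regular representation of `g : G` as a linear isometric isomorphism of `ℓ²(G)`:
`(λ_g f)(h) = f (g⁻¹ h)`, so that `λ_g δ_h = δ_{g h}`. -/
def lregEquiv (g : G) : l2 G ≃ₗᵢ[ℂ] l2 G where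
  toFun f := ⟨fun h => f (g⁻¹ * h), memℓp_translate g f⟩
  invFun f := ⟨fun h => f (g * h), by have hm := memℓp_translate g⁻¹ f; simp only [inv_inv] at hm; exact hm⟩
  map_add' f₁ f₂ := by ext h; rfl
  map_smul' c f := by ext h; rfl
  left_inv f := by ext h; simp
  right_inv f := by ext h; simp
  norm_map' f := by
    rw [lp.norm_eq_tsum_rpow (by norm_num) _, lp.norm_eq_tsum_rpow (by norm_num) f]
    congr 1
    exact (Equiv.mulLeft g⁻¹).tsum_eq (fun h : G => ‖f h‖ ^ (2 : ℝ≥0∞).toReal)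

/-- The left regular representation of `g : G` as a bounded operator on `ℓ²(G)`. -/
def lregCLM (g : G) : l2 G →L[ℂ] l2 G :=
  (lregEquiv g).toLinearIsometry.toContinuousLinearMap

variable (G) in
/-- A group `G` is *matricial field (MF)* if for every finite set `S ⊆ G` and `ε > 0` there are
`d ∈ ℕ` and `u : G → U(d)` which is `ε`-multiplicative on `S`, has normalized traces of modulus
`< ε` on `S \ {1}`, and realizes the norms of linear combinations of left-regular unitaries up
to `ε` (matrices carry the `ℓ²`-operator norm). -/
def IsMFGroup : Prop :=
  ∀ (S : Finset G) (ε : ℝ), 0 < ε →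
    ∃ (d : ℕ) (u : G → Matrix.unitaryGroup (Fin d) ℂ),
      (∀ g ∈ S, ∀ h ∈ S,
        ‖(u (g * h) : Matrix (Fin d) (Fin d) ℂ)
          - (u g : Matrix (Fin d) (Fin d) ℂ) * (u h : Matrix (Fin d) (Fin d) ℂ)‖ < ε)
      ∧ (∀ g ∈ S, g ≠ 1 →
          ‖(d : ℂ)⁻¹ * Matrix.trace (u g : Matrix (Fin d) (Fin d) ℂ)‖ < ε)
      ∧ ∀ c : G → ℂ, (∀ g ∈ S, ‖c g‖ ≤ 1) →
          |‖∑ g ∈ S, c g • (u g : Matrix (Fin d) (Fin d) ℂ)‖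
            - ‖∑ g ∈ S, c g • lregCLM g‖| < ε



variable {H : Subgroup G}

/-- Right coset decomposition: `G ≃ Q × H` where `Q` is the set of right cosets. -/
def cosetEquiv (H : Subgroup G) :
    Quotient (QuotientGroup.rightRel H) × H ≃ G where
  toFun p := (p.2 : G) * p.1.out
  invFun g := ⟨Quotient.mk _ g,
    ⟨g * ((Quotient.mk _ g : Quotient (QuotientGroup.rightRel H)).out)⁻¹, by
      have := QuotientGroup.rightRel_apply.mp (Quotient.mk_out (s := QuotientGroup.rightRel H) g)
      simpa using this⟩⟩
  left_inv := by
    rintro ⟨q, h⟩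
    have hq : (Quotient.mk _ ((h : G) * q.out) : Quotient (QuotientGroup.rightRel H)) = q := by
      have : (Quotient.mk _ ((h : G) * q.out) : Quotient (QuotientGroup.rightRel H))
          = Quotient.mk _ q.out := Quotient.sound (by
        show (QuotientGroup.rightRel H) ((h : G) * q.out) q.out
        rw [QuotientGroup.rightRel_apply]
        have : q.out * ((h : G) * q.out)⁻¹ = (h : G)⁻¹ := by group
        rw [this]; exact H.inv_mem h.2)
      simpa [Quotient.out_eq] using this
    ext
    · exact hq
    · simp [hq]
  right_inv := by
    intro g
    simp [mul_assoc]

def extFun (H : Subgroup G) (f : l2 H) : G → ℂ :=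
  Function.extend (fun h : H => (h : G)) (⇑f) 0

lemma extFun_coe (f : l2 H) (h : H) : extFun H f ↑h = f h :=
  Subtype.coe_injective.extend_apply _ _ _

lemma extFun_of_not_mem (f : l2 H) {x : G} (hx : x ∉ H) : extFun H f x = 0 := by
  rw [extFun, Function.extend_apply' _ _ _ (by rintro ⟨h, rfl⟩; exact hx h.2)]
  rfl

lemma extFun_indicator (f : l2 H) :
    (fun x : G => ‖extFun H f x‖ ^ (2 : ℝ≥0∞).toReal)
      = (H : Set G).indicator (fun x : G => ‖extFun H f x‖ ^ (2 : ℝ≥0∞).toReal) := by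
  ext x
  by_cases hx : x ∈ H
  · rw [Set.indicator_of_mem hx]
  · rw [Set.indicator_of_notMem hx, extFun_of_not_mem f hx, norm_zero,
      Real.zero_rpow (by norm_num)]

lemma l2_summable {ι : Type*} (f : lp (fun _ : ι => ℂ) 2) :
    Summable fun i => ‖f i‖ ^ (2 : ℝ≥0∞).toReal := by
  have hf := lp.memℓp f
  rwa [memℓp_gen_iff (by norm_num)] at hf

lemma memℓp_extFun (f : l2 H) : Memℓp (extFun H f) 2 := by
  rw [memℓp_gen_iff (by norm_num)]
  have : Summable (fun x : (H : Set G) => ‖extFun H f ↑x‖ ^ (2 : ℝ≥0∞).toReal) := by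
    apply Summable.congr (l2_summable f)
    intro h
    rw [extFun_coe]
  rw [show (fun x : G => ‖extFun H f x‖ ^ (2 : ℝ≥0∞).toReal)
      = (H : Set G).indicator (fun x : G => ‖extFun H f x‖ ^ (2 : ℝ≥0∞).toReal)
    from extFun_indicator f]
  exact summable_subtype_iff_indicator.mp this

def extL (f : l2 H) : l2 G := ⟨extFun H f, memℓp_extFun f⟩

@[simp] lemma extL_apply (f : l2 H) (x : G) : (extL f : G → ℂ) x = extFun H f x := rfl

lemma norm_extL (f : l2 H) : ‖extL f‖ = ‖f‖ := by
  rw [lp.norm_eq_tsum_rpow (by norm_num) _, lp.norm_eq_tsum_rpow (by norm_num) f]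
  congr 1
  calc ∑' x : G, ‖extFun H f x‖ ^ (2 : ℝ≥0∞).toReal
      = ∑' x : G, (H : Set G).indicator
          (fun x : G => ‖extFun H f x‖ ^ (2 : ℝ≥0∞).toReal) x := by
        rw [← extFun_indicator]
    _ = ∑' x : (H : Set G), ‖extFun H f ↑x‖ ^ (2 : ℝ≥0∞).toReal := (tsum_subtype _ _).symm
    _ = ∑' h : H, ‖f h‖ ^ (2 : ℝ≥0∞).toReal := by
        apply tsum_congr; intro h; rw [extFun_coe]

lemma lregCLM_apply (g : G) (f : l2 G) (x : G) :
    (lregCLM g f : G → ℂ) x = f (g⁻¹ * x) := rfl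

lemma sum_lreg_apply {ι : Type*} (S : Finset ι) (c : ι → ℂ) (g : ι → G) (f : l2 G) (x : G) :
    ((∑ i ∈ S, c i • lregCLM (g i)) f : G → ℂ) x = ∑ i ∈ S, c i * f ((g i)⁻¹ * x) := by
  rw [ContinuousLinearMap.sum_apply, lp.coeFn_sum, Finset.sum_apply]
  refine Finset.sum_congr rfl fun i _ => ?_
  rw [ContinuousLinearMap.smul_apply, lp.coeFn_smul, Pi.smul_apply, smul_eq_mul, lregCLM_apply]

lemma memℓp_resFun (q : Quotient (QuotientGroup.rightRel H)) (f : l2 G) :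
    Memℓp (fun h : H => f ((h : G) * q.out)) 2 := by
  rw [memℓp_gen_iff (by norm_num)]
  have hinj : Function.Injective (fun h : H => (h : G) * q.out) :=
    fun a b hab => Subtype.coe_injective (by simpa using hab)
  exact (l2_summable f).comp_injective hinj

def resFun (H : Subgroup G) (q : Quotient (QuotientGroup.rightRel H)) (f : l2 G) : l2 H :=
  ⟨fun h => f ((h : G) * q.out), memℓp_resFun q f⟩

lemma resFun_apply (q : Quotient (QuotientGroup.rightRel H)) (f : l2 G) (h : H) :
    (resFun H q f : H → ℂ) h = f ((h : G) * q.out) := rfl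

set_option maxHeartbeats 1000000 in
lemma norm_sum_lregCLM (H : Subgroup G) (S : Finset H) (c : H → ℂ) :
    ‖∑ h ∈ S, c h • lregCLM ((h : G))‖ = ‖∑ h ∈ S, c h • lregCLM h‖ := by
  have hpos : (0 : ℝ) < (2 : ℝ≥0∞).toReal := by norm_num
  -- intertwining with the extension map
  have hext : ∀ f : l2 H,
      (∑ h ∈ S, c h • lregCLM ((h : G))) (extL f)
        = extL ((∑ h ∈ S, c h • lregCLM h) f) := by
    intro f
    ext x
    rw [extL_apply]
    by_cases hx : x ∈ H
    · simp only [sum_lreg_apply]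
      have hxcoe : extFun H ((∑ h ∈ S, c h • lregCLM h) f) x
          = ((∑ h ∈ S, c h • lregCLM h) f) ⟨x, hx⟩ := by
        conv_lhs => rw [show x = ((⟨x, hx⟩ : H) : G) from rfl]
        exact extFun_coe _ _
      rw [hxcoe, sum_lreg_apply]
      refine Finset.sum_congr rfl fun h _ => ?_
      congr 1
      have heq : (↑h)⁻¹ * x = ((h⁻¹ * ⟨x, hx⟩ : H) : G) := rfl
      rw [extL_apply, heq, extFun_coe]
    · rw [extFun_of_not_mem _ hx]
      simp only [sum_lreg_apply]
      refine Finset.sum_eq_zero fun h _ => ?_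
      have hmem : (↑h)⁻¹ * x ∉ H := by
        intro hm
        exact hx (by simpa using H.mul_mem h.2 hm)
      rw [extL_apply, extFun_of_not_mem _ hmem, mul_zero]
  refine le_antisymm ?_ ?_
  · -- ‖T_G‖ ≤ ‖T_H‖
    refine ContinuousLinearMap.opNorm_le_bound _ (norm_nonneg _) fun f => ?_
    rw [← Real.rpow_le_rpow_iff (norm_nonneg _) (by positivity) hpos]
    -- intertwining with the restriction maps
    have hint : ∀ (q : Quotient (QuotientGroup.rightRel H)) (h' : H),
        ((∑ h ∈ S, c h • lregCLM ((h : G))) f) ((h' : G) * q.out)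
          = ((∑ h ∈ S, c h • lregCLM h) (resFun H q f)) h' := by
      intro q h'
      simp only [sum_lreg_apply]
      refine Finset.sum_congr rfl fun h _ => ?_
      show c h * f ((↑h)⁻¹ * ((h' : G) * q.out)) = c h * resFun H q f (h⁻¹ * h')
      rw [resFun_apply]
      congr 1
      push_cast
      rw [mul_assoc]
    have hfp : Summable fun p : Quotient (QuotientGroup.rightRel H) × H =>
        ‖f (cosetEquiv H p)‖ ^ (2 : ℝ≥0∞).toReal :=
      ((cosetEquiv H).summable_iff
        (f := fun x : G => ‖f x‖ ^ (2 : ℝ≥0∞).toReal)).2 (l2_summable f)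
    have hTp : Summable fun p : Quotient (QuotientGroup.rightRel H) × H =>
        ‖((∑ h ∈ S, c h • lregCLM ((h : G))) f) (cosetEquiv H p)‖ ^ (2 : ℝ≥0∞).toReal :=
      ((cosetEquiv H).summable_iff
        (f := fun x : G => ‖((∑ h ∈ S, c h • lregCLM ((h : G))) f) x‖
          ^ (2 : ℝ≥0∞).toReal)).2 (l2_summable _)
    have hffiber := ((summable_prod_of_nonneg (fun p => by positivity)).1 hfp).1
    have hfmarg := ((summable_prod_of_nonneg (fun p => by positivity)).1 hfp).2
    have hTfiber := ((summable_prod_of_nonneg (fun p => by positivity)).1 hTp).1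
    have h3 : ∀ q, ‖resFun H q f‖ ^ (2 : ℝ≥0∞).toReal
        = ∑' h : H, ‖f ((h : G) * q.out)‖ ^ (2 : ℝ≥0∞).toReal := fun q =>
      lp.norm_rpow_eq_tsum hpos _
    have h4 : ‖f‖ ^ (2 : ℝ≥0∞).toReal
        = ∑' q, ‖resFun H q f‖ ^ (2 : ℝ≥0∞).toReal := by
      rw [lp.norm_rpow_eq_tsum hpos,
        ← Equiv.tsum_eq (cosetEquiv H) (fun x : G => ‖f x‖ ^ (2 : ℝ≥0∞).toReal),
        Summable.tsum_prod' hfp hffiber]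
      exact tsum_congr fun q => (h3 q).symm
    have hRHSsum : Summable fun q =>
        ‖∑ h ∈ S, c h • lregCLM h‖ ^ (2 : ℝ≥0∞).toReal
          * ‖resFun H q f‖ ^ (2 : ℝ≥0∞).toReal := by
      apply Summable.mul_left
      exact hfmarg.congr fun q => (h3 q).symm
    have hbound : ∀ q, ‖(∑ h ∈ S, c h • lregCLM h) (resFun H q f)‖
          ^ (2 : ℝ≥0∞).toReal
        ≤ ‖∑ h ∈ S, c h • lregCLM h‖ ^ (2 : ℝ≥0∞).toReal
          * ‖resFun H q f‖ ^ (2 : ℝ≥0∞).toReal := by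
      intro q
      rw [← Real.mul_rpow (norm_nonneg _) (norm_nonneg _)]
      exact Real.rpow_le_rpow (norm_nonneg _)
        (ContinuousLinearMap.le_opNorm _ _) hpos.le
    calc ‖(∑ h ∈ S, c h • lregCLM ((h : G))) f‖ ^ (2 : ℝ≥0∞).toReal
        = ∑' q, ‖(∑ h ∈ S, c h • lregCLM h) (resFun H q f)‖
            ^ (2 : ℝ≥0∞).toReal := by
          rw [lp.norm_rpow_eq_tsum hpos,
            ← Equiv.tsum_eq (cosetEquiv H)
              (fun x : G => ‖((∑ h ∈ S, c h • lregCLM ((h : G))) f) x‖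
                ^ (2 : ℝ≥0∞).toReal),
            Summable.tsum_prod' hTp hTfiber]
          refine tsum_congr fun q => ?_
          rw [lp.norm_rpow_eq_tsum hpos]
          exact tsum_congr fun h => by rw [show cosetEquiv H (q, h) = (h : G) * q.out from rfl,
            hint]
      _ ≤ ∑' q, ‖∑ h ∈ S, c h • lregCLM h‖ ^ (2 : ℝ≥0∞).toReal
            * ‖resFun H q f‖ ^ (2 : ℝ≥0∞).toReal := by
          refine Summable.tsum_le_tsum hbound ?_ hRHSsum
          exact Summable.of_nonneg_of_le (fun q => by positivity) hbound hRHSsum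
      _ = ‖∑ h ∈ S, c h • lregCLM h‖ ^ (2 : ℝ≥0∞).toReal
            * ∑' q, ‖resFun H q f‖ ^ (2 : ℝ≥0∞).toReal := tsum_mul_left
      _ = ‖∑ h ∈ S, c h • lregCLM h‖ ^ (2 : ℝ≥0∞).toReal
            * ‖f‖ ^ (2 : ℝ≥0∞).toReal := by rw [← h4]
      _ = (‖∑ h ∈ S, c h • lregCLM h‖ * ‖f‖) ^ (2 : ℝ≥0∞).toReal :=
          (Real.mul_rpow (norm_nonneg _) (norm_nonneg _)).symm
  · -- ‖T_H‖ ≤ ‖T_G‖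
    refine ContinuousLinearMap.opNorm_le_bound _ (norm_nonneg _) fun f => ?_
    calc ‖(∑ h ∈ S, c h • lregCLM h) f‖
        = ‖extL ((∑ h ∈ S, c h • lregCLM h) f)‖ := (norm_extL _).symm
      _ = ‖(∑ h ∈ S, c h • lregCLM ((h : G))) (extL f)‖ := by rw [hext]
      _ ≤ ‖∑ h ∈ S, c h • lregCLM ((h : G))‖ * ‖extL f‖ :=
          ContinuousLinearMap.le_opNorm _ _
      _ = ‖∑ h ∈ S, c h • lregCLM ((h : G))‖ * ‖f‖ := by rw [norm_extL]


/-- Every subgroup of an MF group is MF. -/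
theorem isMFGroup_subgroup (G : Type*) [Group G] (hG : IsMFGroup G) (H : Subgroup G) :
    IsMFGroup H := by
  intro S ε hε
  classical
  obtain ⟨d, u, hmul, htr, hnorm⟩ := hG (S.image (fun h : H => (h : G))) ε hε
  refine ⟨d, fun h => u ↑h, ?_, ?_, ?_⟩
  · intro g hg h hh
    have := hmul ↑g (Finset.mem_image_of_mem _ hg) ↑h (Finset.mem_image_of_mem _ hh)
    simpa using this
  · intro g hg hg1
    exact htr ↑g (Finset.mem_image_of_mem _ hg) (fun h1 => hg1 (by exact_mod_cast h1))
  · intro c hc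
    set c' : G → ℂ := Function.extend (fun h : H => (h : G)) c 0 with hc'def
    have hc'coe : ∀ h : H, c' ↑h = c h := fun h => Subtype.coe_injective.extend_apply _ _ _
    have h1 : ∀ g ∈ S.image (fun h : H => (h : G)), ‖c' g‖ ≤ 1 := by
      intro g hg
      obtain ⟨h, hh, rfl⟩ := Finset.mem_image.mp hg
      rw [hc'coe]
      exact hc h hh
    have hinj : ∀ a ∈ S, ∀ b ∈ S, (a : G) = (b : G) → a = b :=
      fun a _ b _ hab => Subtype.coe_injective hab
    have := hnorm c' h1
    rw [Finset.sum_image hinj, Finset.sum_image hinj] at this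
    simp only [hc'coe] at this
    rwa [norm_sum_lregCLM H S c] at this

end
end
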